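/- Let (X, μ) be a measure space and let f, g, h, k ∈ L²(μ). Then ∫_X (f·g + h·k) dμ ≤ (∫_X f² dμ)^{1/2}(∫_X g² dμ)^{1/2} + (∫_X h² dμ)^{1/2}(∫_X k² dμ)^{1/2}, and consequently (∫_X (f² + h²) dμ)·(∫_X (g² + k²) dμ) − (∫_X (f·g + h·k) dμ)² ≥ ((∫_X f² dμ)^{1/2}(∫_X k² dμ)^{1/2} − (∫_X g² dμ)^{1/2}(∫_X h² dμ)^{1/2})² ≥ 0. -/

import Mathlib

open MeasureTheory


private lemma intmul {X : Type*} [MeasurableSpace X] {μ : Measure X}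
    {f g : X → ℝ} (hf : MemLp f 2 μ) (hg : MemLp g 2 μ) :
    Integrable (fun x => f x * g x) μ := by
  refine Integrable.mono' (hf.integrable_sq.add hg.integrable_sq) (hf.1.mul hg.1) ?_
  filter_upwards with x
  rw [Real.norm_eq_abs, abs_mul]
  simp only [Pi.add_apply]
  nlinarith [sq_nonneg (|f x| - |g x|), sq_abs (f x), sq_abs (g x)]

private lemma cs {X : Type*} [MeasurableSpace X] {μ : Measure X}
    {f g : X → ℝ} (hf : MemLp f 2 μ) (hg : MemLp g 2 μ) :
    ∫ x, f x * g x ∂μ ≤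
      Real.sqrt (∫ x, (f x) ^ 2 ∂μ) * Real.sqrt (∫ x, (g x) ^ 2 ∂μ) := by
  set A := ∫ x, (f x) ^ 2 ∂μ with hA
  set B := ∫ x, (g x) ^ 2 ∂μ with hB
  set I := ∫ x, f x * g x ∂μ with hI
  have hA0 : 0 ≤ A := integral_nonneg fun x => sq_nonneg _
  have hB0 : 0 ≤ B := integral_nonneg fun x => sq_nonneg _
  have hf2 := hf.integrable_sq
  have hg2 := hg.integrable_sq
  have hfg := intmul hf hg
  set a := Real.sqrt A with ha
  set b := Real.sqrt B with hb
  have ha2 : a ^ 2 = A := Real.sq_sqrt hA0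
  have hb2 : b ^ 2 = B := Real.sq_sqrt hB0
  have ha0 : 0 ≤ a := Real.sqrt_nonneg _
  have hb0 : 0 ≤ b := Real.sqrt_nonneg _
  have expand : ∫ x, (b * f x - a * g x) ^ 2 ∂μ = b ^ 2 * A - 2 * a * b * I + a ^ 2 * B := by
    have heq : ∀ x, (b * f x - a * g x) ^ 2
        = b ^ 2 * (f x) ^ 2 - 2 * a * b * (f x * g x) + a ^ 2 * (g x) ^ 2 := fun x => by ring
    simp_rw [heq]
    have e1 : Integrable (fun x => b ^ 2 * (f x) ^ 2 - 2 * a * b * (f x * g x)) μ :=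
      (hf2.const_mul _).sub (hfg.const_mul _)
    have e2 : Integrable (fun x => a ^ 2 * (g x) ^ 2) μ := hg2.const_mul _
    rw [integral_add e1 e2, integral_sub (hf2.const_mul _) (hfg.const_mul _),
      integral_const_mul, integral_const_mul, integral_const_mul]
  have key : 0 ≤ b ^ 2 * A - 2 * a * b * I + a ^ 2 * B := by
    rw [← expand]; exact integral_nonneg fun x => sq_nonneg _
  rcases eq_or_lt_of_le (mul_nonneg ha0 hb0) with hab | hab
  · rcases mul_eq_zero.mp hab.symm with h0 | h0
    · have hA' : A = 0 := by rw [← ha2, h0]; ring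
      have hf0 : (fun x => (f x) ^ 2) =ᵐ[μ] 0 :=
        (integral_eq_zero_iff_of_nonneg (fun x => sq_nonneg _) hf2).mp hA'
      have : I = 0 := by
        rw [hI]
        refine integral_eq_zero_of_ae ?_
        filter_upwards [hf0] with x hx
        have : f x = 0 := by
          have := hx; simp only [Pi.zero_apply] at this; exact pow_eq_zero_iff (n := 2) (by norm_num) |>.mp this
        simp [this]
      rw [this, ← hab]
    · have hB' : B = 0 := by rw [← hb2, h0]; ring
      have hg0 : (fun x => (g x) ^ 2) =ᵐ[μ] 0 :=
        (integral_eq_zero_iff_of_nonneg (fun x => sq_nonneg _) hg2).mp hB'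
      have : I = 0 := by
        rw [hI]
        refine integral_eq_zero_of_ae ?_
        filter_upwards [hg0] with x hx
        have : g x = 0 := by
          have := hx; simp only [Pi.zero_apply] at this; exact pow_eq_zero_iff (n := 2) (by norm_num) |>.mp this
        simp [this]
      rw [this, ← hab]
  · nlinarith [key, ha2, hb2, hab]

/-- **Refined Cauchy–Schwarz inequality** used in the concavity method for the
pseudo-parabolic equation: for `f, g, h, k ∈ L²(μ)`,
`∫ (f·g + h·k) ≤ (∫f²)^{1/2}(∫g²)^{1/2} + (∫h²)^{1/2}(∫k²)^{1/2}`, and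
`(∫(f²+h²))·(∫(g²+k²)) − (∫(f·g+h·k))² ≥
  ((∫f²)^{1/2}(∫k²)^{1/2} − (∫g²)^{1/2}(∫h²)^{1/2})² ≥ 0`. -/
theorem stmt_4 {X : Type*} [MeasurableSpace X] (μ : Measure X)
    (f g h k : X → ℝ)
    (hf : MemLp f 2 μ) (hg : MemLp g 2 μ) (hh : MemLp h 2 μ) (hk : MemLp k 2 μ) :
    (∫ x, (f x * g x + h x * k x) ∂μ ≤
        (∫ x, (f x) ^ 2 ∂μ) ^ ((1 : ℝ) / 2) * (∫ x, (g x) ^ 2 ∂μ) ^ ((1 : ℝ) / 2) +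
          (∫ x, (h x) ^ 2 ∂μ) ^ ((1 : ℝ) / 2) * (∫ x, (k x) ^ 2 ∂μ) ^ ((1 : ℝ) / 2)) ∧
      (((∫ x, (f x) ^ 2 ∂μ) ^ ((1 : ℝ) / 2) * (∫ x, (k x) ^ 2 ∂μ) ^ ((1 : ℝ) / 2) -
            (∫ x, (g x) ^ 2 ∂μ) ^ ((1 : ℝ) / 2) * (∫ x, (h x) ^ 2 ∂μ) ^ ((1 : ℝ) / 2)) ^ 2 ≤
          (∫ x, ((f x) ^ 2 + (h x) ^ 2) ∂μ) * (∫ x, ((g x) ^ 2 + (k x) ^ 2) ∂μ) -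
            (∫ x, (f x * g x + h x * k x) ∂μ) ^ 2) ∧
      0 ≤ ((∫ x, (f x) ^ 2 ∂μ) ^ ((1 : ℝ) / 2) * (∫ x, (k x) ^ 2 ∂μ) ^ ((1 : ℝ) / 2) -
            (∫ x, (g x) ^ 2 ∂μ) ^ ((1 : ℝ) / 2) * (∫ x, (h x) ^ 2 ∂μ) ^ ((1 : ℝ) / 2)) ^ 2 := by
  simp_rw [← Real.sqrt_eq_rpow]
  have hfg := intmul hf hg
  have hhk := intmul hh hk
  have hIsplit : ∫ x, (f x * g x + h x * k x) ∂μ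
      = (∫ x, f x * g x ∂μ) + ∫ x, h x * k x ∂μ := integral_add hfg hhk
  set A := ∫ x, (f x) ^ 2 ∂μ
  set B := ∫ x, (g x) ^ 2 ∂μ
  set C := ∫ x, (h x) ^ 2 ∂μ
  set D := ∫ x, (k x) ^ 2 ∂μ
  set I := ∫ x, (f x * g x + h x * k x) ∂μ
  have h1 : I ≤ Real.sqrt A * Real.sqrt B + Real.sqrt C * Real.sqrt D := by
    rw [hIsplit]; exact add_le_add (cs hf hg) (cs hh hk)
  refine ⟨h1, ?_, sq_nonneg _⟩
  have h2 : -I ≤ Real.sqrt A * Real.sqrt B + Real.sqrt C * Real.sqrt D := by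
    have c1 : ∫ x, (-f) x * g x ∂μ ≤ Real.sqrt (∫ x, ((-f) x) ^ 2 ∂μ) * Real.sqrt B :=
      cs hf.neg hg
    have c2 : ∫ x, (-h) x * k x ∂μ ≤ Real.sqrt (∫ x, ((-h) x) ^ 2 ∂μ) * Real.sqrt D :=
      cs hh.neg hk
    simp only [Pi.neg_apply, neg_mul, neg_sq, integral_neg] at c1 c2
    rw [hIsplit]
    linarith
  have hAC : ∫ x, ((f x) ^ 2 + (h x) ^ 2) ∂μ = A + C :=
    integral_add hf.integrable_sq hh.integrable_sq
  have hBD : ∫ x, ((g x) ^ 2 + (k x) ^ 2) ∂μ = B + D :=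
    integral_add hg.integrable_sq hk.integrable_sq
  rw [hAC, hBD]
  have ha2 : Real.sqrt A ^ 2 = A := Real.sq_sqrt (integral_nonneg fun x => sq_nonneg _)
  have hb2 : Real.sqrt B ^ 2 = B := Real.sq_sqrt (integral_nonneg fun x => sq_nonneg _)
  have hc2 : Real.sqrt C ^ 2 = C := Real.sq_sqrt (integral_nonneg fun x => sq_nonneg _)
  have hd2 : Real.sqrt D ^ 2 = D := Real.sq_sqrt (integral_nonneg fun x => sq_nonneg _)
  nlinarith [sq_nonneg (Real.sqrt A * Real.sqrt B + Real.sqrt C * Real.sqrt D - I),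
    sq_nonneg (Real.sqrt A * Real.sqrt B + Real.sqrt C * Real.sqrt D + I), h1, h2]
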